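/- Let Γ be a graph with weight function ω into ℤ_n, let W be a closed walk of odd length based at u_0, and fix i ∈ ℤ_n. Set a = 1 if ω(W) ≡ 2i (mod n) and a = 2 otherwise. Then for b ∈ ℤ, the lift of W^b based at (u_0, i) in Γ^ω is a closed walk if and only if a divides b. -/
import Mathlib

/-- The alternating weight of a walk. -/
def altWeight {V : Type*} {n : ℕ} {Γ : SimpleGraph V} (ω : Sym2 V → ZMod n) :
    ∀ {u v : V}, Γ.Walk u v → ZMod n
  | _, _, SimpleGraph.Walk.nil => 0
  | _, _, @SimpleGraph.Walk.cons _ _ a b _ _ q => ω s(a, b) - altWeight ω q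

/-- The fibre coordinate of the final vertex of the lift, in the cross-cover `Γ^ω`,
of a walk based at `(u₀, i)`: each step along an edge `e` sends `i` to `ω(e) - i`. -/
def liftEnd {V : Type*} {n : ℕ} {Γ : SimpleGraph V} (ω : Sym2 V → ZMod n) :
    ∀ {u v : V}, Γ.Walk u v → ZMod n → ZMod n
  | _, _, SimpleGraph.Walk.nil, i => i
  | _, _, @SimpleGraph.Walk.cons _ _ a b _ _ q, i => liftEnd ω q (ω s(a, b) - i)

/-- The `b`-fold concatenation `W^b` of a closed walk `W` with itself. -/
def wpow {V : Type*} {Γ : SimpleGraph V} {u : V} (p : Γ.Walk u u) : ℕ → Γ.Walk u u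
  | 0 => SimpleGraph.Walk.nil
  | b + 1 => p.append (wpow p b)

lemma liftEnd_eq {V : Type*} {n : ℕ} {Γ : SimpleGraph V} (ω : Sym2 V → ZMod n)
    {u v : V} (p : Γ.Walk u v) (i : ZMod n) :
    liftEnd ω p i = (-1)^(p.length+1) * altWeight ω p + (-1)^p.length * i := by
  induction p generalizing i with
  | nil => simp [liftEnd, altWeight]
  | cons h q ih =>
    simp only [liftEnd, altWeight, SimpleGraph.Walk.length_cons, ih, pow_succ]
    ring

lemma liftEnd_append {V : Type*} {n : ℕ} {Γ : SimpleGraph V} (ω : Sym2 V → ZMod n)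
    {u v w : V} (p : Γ.Walk u v) (q : Γ.Walk v w) (i : ZMod n) :
    liftEnd ω (p.append q) i = liftEnd ω q (liftEnd ω p i) := by
  induction p generalizing i with
  | nil => rfl
  | cons h r ih => simp [liftEnd, ih]

lemma liftEnd_odd {V : Type*} {n : ℕ} {Γ : SimpleGraph V} (ω : Sym2 V → ZMod n)
    {u v : V} (p : Γ.Walk u v) (h : Odd p.length) (i : ZMod n) :
    liftEnd ω p i = altWeight ω p - i := by
  rw [liftEnd_eq, Odd.neg_one_pow h, Even.neg_one_pow (by simpa using h.add_one)]
  ring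

lemma liftEnd_wpow {V : Type*} {n : ℕ} {Γ : SimpleGraph V} (ω : Sym2 V → ZMod n)
    {u : V} (p : Γ.Walk u u) (h : Odd p.length) (b : ℕ) (i : ZMod n) :
    liftEnd ω (wpow p b) i = if Even b then i else altWeight ω p - i := by
  induction b generalizing i with
  | zero => simp [wpow, liftEnd]
  | succ b ih =>
    rw [wpow, liftEnd_append, liftEnd_odd ω p h, ih]
    rcases Nat.even_or_odd b with hb | hb
    · simp [hb, Nat.even_add_one, hb]
    · simp [hb, Nat.even_add_one, Nat.not_even_iff_odd.mpr hb]

/-- Let `W` be a closed walk of odd length based at `u₀` and fix `i ∈ ℤ_n`.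
Set `a = 1` if `ω(W) ≡ 2i (mod n)` and `a = 2` otherwise.  Then the lift of `W^b`
based at `(u₀, i)` is a closed walk if and only if `a ∣ b`. -/
theorem lift_odd_closed_iff {V : Type*} {n : ℕ} {Γ : SimpleGraph V}
    (ω : Sym2 V → ZMod n) {u : V} (p : Γ.Walk u u) (hOdd : Odd p.length)
    (i : ZMod n) (b : ℕ) :
    liftEnd ω (wpow p b) i = i ↔
      (if altWeight ω p = 2 * i then 1 else 2) ∣ b := by
  rw [liftEnd_wpow ω p hOdd]
  by_cases hw : altWeight ω p = 2 * i
  · simp only [hw, if_pos rfl, one_dvd, iff_true]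
    split <;> ring_nf <;> simp [two_mul] at hw ⊢
  · rw [if_neg hw]
    rcases Nat.even_or_odd b with hb | hb
    · simp [hb, hb.two_dvd]
    · rw [if_neg (Nat.not_even_iff_odd.mpr hb)]
      constructor
      · intro h; exact absurd (by rw [sub_eq_iff_eq_add, ← two_mul] at h; exact h) hw
      · intro h; exact absurd ((even_iff_two_dvd).mpr h) (Nat.not_even_iff_odd.mpr hb)
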